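/- arXiv:cond-mat/9412001 — 5 statements merged into one kernel-verified Lean document; each statement's English description precedes it below -/
import Mathlib

section
/- Let L ≥ 1, let G = (ℤ/Lℤ)³, e_p(λ) = exp(2πi (p·λ)/L), and let D : G → M₃(ℝ) take values in symmetric 3×3 real matrices with D(−λ) = D(λ) and D(0) = 0. Set Â(p) = ∑_{λ≠0} D(λ) e_p(λ). Assume that for every p ∈ G with p ≠ 0 the Hermitian matrix Â(0) − Â(p) is positive definite. Then the quadratic form Q(y) = ½ ∑_{λ,μ∈G, λ≠μ} ⟨y(λ)−y(μ), D(λ−μ)(y(λ)−y(μ))⟩ satisfies Q(y) ≥ 0 for all y : G → ℝ³, and Q(y) = 0 if and only if y is constant. -/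
open scoped BigOperators
open Matrix
open scoped ComplexOrder

/-- The character `e_p(λ) = exp(2πi (p·λ)/L)` on `(ℤ/Lℤ)³`, with `p·λ` computed from
the canonical representatives. -/
noncomputable def charZmod (L : ℕ) (p l : Fin 3 → ZMod L) : ℂ :=
  Complex.exp (2 * Real.pi * Complex.I * ((∑ i, (p i).val * (l i).val : ℕ) : ℂ) / L)

/-- The Fourier symbol `Â(p) = ∑_{λ≠0} D(λ) e_p(λ) ∈ M₃(ℂ)`. -/
noncomputable def AFourier (L : ℕ) [NeZero L]
    (D : (Fin 3 → ZMod L) → Matrix (Fin 3) (Fin 3) ℝ) (p : Fin 3 → ZMod L) :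
    Matrix (Fin 3) (Fin 3) ℂ :=
  ∑ l ∈ Finset.univ.erase (0 : Fin 3 → ZMod L), charZmod L p l • (D l).map ((↑) : ℝ → ℂ)

/-- The harmonic deviation energy quadratic form
`Q(y) = ½ ∑_{λ≠μ} ⟨y λ − y μ, D(λ−μ)(y λ − y μ)⟩`. -/
noncomputable def Qform (L : ℕ) [NeZero L]
    (D : (Fin 3 → ZMod L) → Matrix (Fin 3) (Fin 3) ℝ)
    (y : (Fin 3 → ZMod L) → Fin 3 → ℝ) : ℝ :=
  (1 / 2) * ∑ l : Fin 3 → ZMod L, ∑ m ∈ Finset.univ.erase l,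
    (y l - y m) ⬝ᵥ (D (l - m)).mulVec (y l - y m)

/-!
Plancherel on the finite group `G`. With `ŷ(ψ) = ∑ λ, ψ λ • y λ` indexed by the characters
`ψ` of `G`, the convolution theorem and Parseval's identity give
`∑ ψ, ŷ(ψ)ᴴ (Â(0) - Â(ψ)) ŷ(ψ) = |G| • Q(y)`, where evenness of `D` identifies the two cross
terms of `Q`. Each summand is nonnegative, and positive unless `ψ` is trivial or `ŷ(ψ) = 0`.
Hence `Q ≥ 0`, and `Q(y) = 0` forces `ŷ` to vanish off the trivial character, which by Fourier
inversion means that `y` is constant. For `G = (ℤ/Lℤ)³` the characters are exactly the `e_p`.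
-/

section Fourier

variable {G : Type*} [AddCommGroup G] [Fintype G]

noncomputable def dft {E : Type*} [AddCommMonoid E] [Module ℂ E] (f : G → E)
    (ψ : AddChar G ℂ) : E :=
  ∑ l, ψ l • f l

lemma dft_zero {E : Type*} [AddCommMonoid E] [Module ℂ E] (f : G → E) :
    dft f 0 = ∑ l, f l := by
  simp [dft]

lemma star_dft {E : Type*} [AddCommMonoid E] [Module ℂ E] [StarAddMonoid E] [StarModule ℂ E]
    (f : G → E) (ψ : AddChar G ℂ) : star (dft f ψ) = ∑ l, ψ (-l) • star (f l) := by
  simp [dft, star_sum, star_smul, AddChar.map_neg_eq_conj]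

variable {ι : Type*} [Fintype ι]

lemma mulVec_dft (M : Matrix ι ι ℂ) (y : G → ι → ℂ) (ψ : AddChar G ℂ) :
    M *ᵥ dft y ψ = dft (fun l => M *ᵥ y l) ψ := by
  simp [dft, mulVec_sum, mulVec_smul]

lemma dft_mulVec_dft (K : G → Matrix ι ι ℂ) (y : G → ι → ℂ) (ψ : AddChar G ℂ) :
    dft K ψ *ᵥ dft y ψ = dft (fun l => ∑ m, K (l - m) *ᵥ y m) ψ := by
  calc dft K ψ *ᵥ dft y ψ = ∑ m, ∑ ν, ψ (m + ν) • K ν *ᵥ y m := by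
        simp only [dft, mulVec_sum, sum_mulVec, mulVec_smul, smul_mulVec, Finset.smul_sum,
          smul_smul, AddChar.map_add_eq_mul]
    _ = ∑ m, ∑ l, ψ l • K (l - m) *ᵥ y m := by
        refine Finset.sum_congr rfl fun m _ => ?_
        exact Fintype.sum_equiv (Equiv.addLeft m) _ _ fun ν => by simp
    _ = dft (fun l => ∑ m, K (l - m) *ᵥ y m) ψ := by
        simp only [dft, Finset.smul_sum]
        exact Finset.sum_comm

variable [DecidableEq G]

lemma sum_map_neg_smul_dft {E : Type*} [AddCommGroup E] [Module ℂ E] (f : G → E) (l : G) :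
    ∑ ψ : AddChar G ℂ, ψ (-l) • dft f ψ = (Fintype.card G : ℂ) • f l := by
  calc ∑ ψ : AddChar G ℂ, ψ (-l) • dft f ψ
      = ∑ m, (∑ ψ : AddChar G ℂ, ψ (m - l)) • f m := by
        simp only [dft, Finset.smul_sum, smul_smul, Finset.sum_smul, sub_eq_add_neg,
          AddChar.map_add_eq_mul, mul_comm (_ : ℂ)]
        exact Finset.sum_comm
    _ = (Fintype.card G : ℂ) • f l := by
        simp [AddChar.sum_apply_eq_ite, sub_eq_zero, ite_smul]

lemma apply_eq_of_forall_ne_zero_dft_eq_zero {E : Type*} [AddCommGroup E] [Module ℂ E] {f : G → E}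
    (hf : ∀ ψ : AddChar G ℂ, ψ ≠ 0 → dft f ψ = 0) (l m : G) : f l = f m := by
  have hinv : ∀ l, (Fintype.card G : ℂ) • f l = dft f 0 := fun l => by
    rw [← sum_map_neg_smul_dft, Fintype.sum_eq_single 0 fun ψ hψ => by rw [hf ψ hψ, smul_zero]]
    simp
  exact (smul_right_inj (Nat.cast_ne_zero.2 Fintype.card_ne_zero)).1
    ((hinv l).trans (hinv m).symm)

lemma sum_star_dft_dotProduct_dft (u v : G → ι → ℂ) :
    ∑ ψ : AddChar G ℂ, star (dft u ψ) ⬝ᵥ dft v ψ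
      = (Fintype.card G : ℂ) * ∑ l, star (u l) ⬝ᵥ v l := by
  calc ∑ ψ : AddChar G ℂ, star (dft u ψ) ⬝ᵥ dft v ψ
      = ∑ m, ∑ l, (∑ ψ : AddChar G ℂ, ψ (m - l)) * (star (u l) ⬝ᵥ v m) := by
        simp only [star_dft]
        simp only [dft, sum_dotProduct, dotProduct_sum, smul_dotProduct, dotProduct_smul,
          smul_eq_mul, Finset.mul_sum, Finset.sum_mul, sub_eq_add_neg, AddChar.map_add_eq_mul,
          mul_assoc]
        rw [Finset.sum_comm]
        exact Finset.sum_congr rfl fun m _ => Finset.sum_comm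
    _ = (Fintype.card G : ℂ) * ∑ l, star (u l) ⬝ᵥ v l := by
        simp [AddChar.sum_apply_eq_ite, sub_eq_zero, Finset.mul_sum]

end Fourier

section DeviationEnergy

variable {G ι : Type*} [AddCommGroup G] [Fintype G]

-- Unlike `AFourier`, the symbol includes the term `ν = 0`; it cancels in `Â(0) - Â(ψ)`.
noncomputable def fourierSymbol (D : G → Matrix ι ι ℝ) : AddChar G ℂ → Matrix ι ι ℂ :=
  dft fun ν => (D ν).map ((↑) : ℝ → ℂ)

lemma fourierSymbol_sub_posSemidef {D : G → Matrix ι ι ℝ}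
    (hgap : ∀ ψ : AddChar G ℂ, ψ ≠ 0 → (fourierSymbol D 0 - fourierSymbol D ψ).PosDef)
    (ψ : AddChar G ℂ) : (fourierSymbol D 0 - fourierSymbol D ψ).PosSemidef := by
  rcases eq_or_ne ψ 0 with rfl | hψ
  · simpa using PosSemidef.zero
  · exact (hgap ψ hψ).posSemidef

variable [Fintype ι]

noncomputable def deviationEnergy (D : G → Matrix ι ι ℝ) (y : G → ι → ℝ) : ℝ :=
  (1 / 2) * ∑ l, ∑ m, (y l - y m) ⬝ᵥ D (l - m) *ᵥ (y l - y m)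

lemma sum_sum_sub_dotProduct_mulVec_sub {R : Type*} [CommRing R] (D : G → Matrix ι ι R)
    (heven : ∀ l, D (-l) = D l) (y : G → ι → R) :
    ∑ l, ∑ m, (y l - y m) ⬝ᵥ D (l - m) *ᵥ (y l - y m)
      = 2 * (∑ l, ∑ ν, y l ⬝ᵥ D ν *ᵥ y l - ∑ l, ∑ m, y l ⬝ᵥ D (l - m) *ᵥ y m) := by
  have hleft : ∑ l, ∑ m, y l ⬝ᵥ D (l - m) *ᵥ y l = ∑ l, ∑ ν, y l ⬝ᵥ D ν *ᵥ y l :=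
    Finset.sum_congr rfl fun l _ => Fintype.sum_equiv (Equiv.subLeft l) _ _ fun _ => rfl
  have hright : ∑ l, ∑ m, y m ⬝ᵥ D (l - m) *ᵥ y m = ∑ l, ∑ ν, y l ⬝ᵥ D ν *ᵥ y l := by
    rw [Finset.sum_comm]
    exact Finset.sum_congr rfl fun m _ => Fintype.sum_equiv (Equiv.subRight m) _ _ fun _ => rfl
  have hcross : ∑ l, ∑ m, y m ⬝ᵥ D (l - m) *ᵥ y l = ∑ l, ∑ m, y l ⬝ᵥ D (l - m) *ᵥ y m := by
    rw [Finset.sum_comm]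
    exact Finset.sum_congr rfl fun l _ => Finset.sum_congr rfl fun m _ => by
      rw [← neg_sub, heven]
  simp only [mulVec_sub, dotProduct_sub, sub_dotProduct, Finset.sum_sub_distrib]
  rw [hleft, hright, hcross]
  ring

variable [DecidableEq G]

lemma star_ofReal_dotProduct_mulVec (M : Matrix ι ι ℝ) (v w : ι → ℝ) :
    star (fun i => (v i : ℂ)) ⬝ᵥ M.map ((↑) : ℝ → ℂ) *ᵥ (fun i => (w i : ℂ))
      = ((v ⬝ᵥ M *ᵥ w : ℝ) : ℂ) := by
  simp [dotProduct, mulVec, Finset.mul_sum]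

theorem sum_star_dft_dotProduct_fourierSymbol_sub_mulVec_dft (D : G → Matrix ι ι ℝ)
    (heven : ∀ l, D (-l) = D l) (y : G → ι → ℝ) :
    ∑ ψ : AddChar G ℂ, star (dft (fun l i => (y l i : ℂ)) ψ) ⬝ᵥ
        (fourierSymbol D 0 - fourierSymbol D ψ)
          *ᵥ dft (fun l i => (y l i : ℂ)) ψ
      = (Fintype.card G : ℂ) * deviationEnergy D y := by
  simp only [fourierSymbol, sub_mulVec, dotProduct_sub, Finset.sum_sub_distrib, dft_mulVec_dft]
  simp only [mulVec_dft, sum_star_dft_dotProduct_dft]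
  simp only [dft_zero, sum_mulVec, dotProduct_sum, star_ofReal_dotProduct_mulVec]
  rw [deviationEnergy, sum_sum_sub_dotProduct_mulVec_sub D heven]
  push_cast
  ring

theorem deviationEnergy_nonneg {D : G → Matrix ι ι ℝ} (heven : ∀ l, D (-l) = D l)
    (hgap : ∀ ψ : AddChar G ℂ, ψ ≠ 0 → (fourierSymbol D 0 - fourierSymbol D ψ).PosDef)
    (y : G → ι → ℝ) : 0 ≤ deviationEnergy D y := by
  have h : (0 : ℂ) ≤ (Fintype.card G : ℂ) * deviationEnergy D y := by
    rw [← sum_star_dft_dotProduct_fourierSymbol_sub_mulVec_dft D heven y]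
    exact Finset.sum_nonneg fun ψ _ =>
      (fourierSymbol_sub_posSemidef hgap ψ).dotProduct_mulVec_nonneg _
  have h' : 0 ≤ (Fintype.card G : ℝ) * deviationEnergy D y := by exact_mod_cast h
  exact (mul_nonneg_iff_of_pos_left (by exact_mod_cast Fintype.card_pos)).1 h'

theorem dft_eq_zero_of_deviationEnergy_eq_zero {D : G → Matrix ι ι ℝ}
    (heven : ∀ l, D (-l) = D l)
    (hgap : ∀ ψ : AddChar G ℂ, ψ ≠ 0 → (fourierSymbol D 0 - fourierSymbol D ψ).PosDef)
    {y : G → ι → ℝ} (hy : deviationEnergy D y = 0) {ψ : AddChar G ℂ} (hψ : ψ ≠ 0) :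
    dft (fun l i => (y l i : ℂ)) ψ = 0 := by
  by_contra hne
  have hsum := sum_star_dft_dotProduct_fourierSymbol_sub_mulVec_dft D heven y
  rw [hy, Complex.ofReal_zero, mul_zero, Finset.sum_eq_zero_iff_of_nonneg fun ψ _ =>
    (fourierSymbol_sub_posSemidef hgap ψ).dotProduct_mulVec_nonneg _] at hsum
  exact ((hgap ψ hψ).dotProduct_mulVec_pos hne).ne' (hsum ψ (Finset.mem_univ _))

theorem deviationEnergy_eq_zero_iff {D : G → Matrix ι ι ℝ} (heven : ∀ l, D (-l) = D l)
    (hgap : ∀ ψ : AddChar G ℂ, ψ ≠ 0 → (fourierSymbol D 0 - fourierSymbol D ψ).PosDef)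
    (y : G → ι → ℝ) : deviationEnergy D y = 0 ↔ ∃ c, ∀ l, y l = c := by
  constructor
  · intro hy
    refine ⟨y 0, fun l => funext fun i => ?_⟩
    have h := apply_eq_of_forall_ne_zero_dft_eq_zero
      (fun ψ hψ => dft_eq_zero_of_deviationEnergy_eq_zero heven hgap hy hψ) l 0
    exact_mod_cast congrFun h i
  · rintro ⟨c, hc⟩
    simp [deviationEnergy, hc]

end DeviationEnergy

section Lattice

variable {κ : Type*} [Fintype κ] {L : ℕ} [NeZero L]

noncomputable def pairingChar (p : κ → ZMod L) : AddChar (κ → ZMod L) ℂ :=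
  ZMod.stdAddChar.compAddMonoidHom (AddMonoidHom.mk' (p ⬝ᵥ ·) (dotProduct_add p))

lemma pairingChar_apply (p l : κ → ZMod L) : pairingChar p l = ZMod.stdAddChar (p ⬝ᵥ l) := rfl

lemma pairingChar_zero : pairingChar (0 : κ → ZMod L) = 0 := by
  ext; simp [pairingChar_apply]

lemma pairingChar_injective [DecidableEq κ] :
    Function.Injective (pairingChar : (κ → ZMod L) → AddChar (κ → ZMod L) ℂ) := by
  intro p q h
  ext i
  have hi := DFunLike.congr_fun h (Pi.single i 1)
  simp only [pairingChar_apply, dotProduct_single, mul_one] at hi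
  exact ZMod.injective_stdAddChar hi

lemma pairingChar_bijective [DecidableEq κ] :
    Function.Bijective (pairingChar : (κ → ZMod L) → AddChar (κ → ZMod L) ℂ) :=
  (Fintype.bijective_iff_injective_and_card _).2 ⟨pairingChar_injective, by simp⟩

end Lattice

section Crystal

variable {L : ℕ} [NeZero L]

lemma charZmod_eq_pairingChar (p l : Fin 3 → ZMod L) :
    charZmod L p l = pairingChar p l := by
  have h := ZMod.stdAddChar_coe (N := L) ((∑ i, (p i).val * (l i).val : ℕ) : ℤ)
  push_cast [ZMod.natCast_zmod_val] at h
  rw [pairingChar_apply, dotProduct, h, charZmod]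
  norm_num

lemma AFourier_eq_fourierSymbol_sub
    (D : (Fin 3 → ZMod L) → Matrix (Fin 3) (Fin 3) ℝ) (p : Fin 3 → ZMod L) :
    AFourier L D p = fourierSymbol D (pairingChar p) - (D 0).map ((↑) : ℝ → ℂ) := by
  rw [AFourier, Finset.sum_erase_eq_sub (Finset.mem_univ _)]
  simp [fourierSymbol, dft, charZmod_eq_pairingChar]

lemma AFourier_zero_sub_AFourier
    (D : (Fin 3 → ZMod L) → Matrix (Fin 3) (Fin 3) ℝ) (p : Fin 3 → ZMod L) :
    AFourier L D 0 - AFourier L D p = fourierSymbol D 0 - fourierSymbol D (pairingChar p) := by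
  rw [AFourier_eq_fourierSymbol_sub, AFourier_eq_fourierSymbol_sub, pairingChar_zero,
    sub_sub_sub_cancel_right]

lemma Qform_eq_deviationEnergy
    (D : (Fin 3 → ZMod L) → Matrix (Fin 3) (Fin 3) ℝ) (y : (Fin 3 → ZMod L) → Fin 3 → ℝ) :
    Qform L D y = deviationEnergy D y := by
  rw [Qform, deviationEnergy]
  congr 1
  exact Finset.sum_congr rfl fun l _ => Finset.sum_erase _ (by simp)

end Crystal

theorem deviation_energy_nonneg_and_kernel_constants_general
    (L : ℕ) [NeZero L]
    (D : (Fin 3 → ZMod L) → Matrix (Fin 3) (Fin 3) ℝ)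
    (heven : ∀ l, D (-l) = D l)
    (hpos : ∀ p : Fin 3 → ZMod L, p ≠ 0 → (AFourier L D 0 - AFourier L D p).PosDef) :
    (∀ y : (Fin 3 → ZMod L) → Fin 3 → ℝ, 0 ≤ Qform L D y) ∧
    (∀ y : (Fin 3 → ZMod L) → Fin 3 → ℝ,
      Qform L D y = 0 ↔ ∃ c : Fin 3 → ℝ, ∀ l, y l = c) := by
  have hgap : ∀ ψ : AddChar (Fin 3 → ZMod L) ℂ, ψ ≠ 0 →
      (fourierSymbol D 0 - fourierSymbol D ψ).PosDef := by
    intro ψ hψ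
    obtain ⟨p, rfl⟩ := pairingChar_bijective.2 ψ
    rw [← AFourier_zero_sub_AFourier]
    exact hpos p (by rintro rfl; exact hψ pairingChar_zero)
  simp only [Qform_eq_deviationEnergy]
  exact ⟨deviationEnergy_nonneg heven hgap, deviationEnergy_eq_zero_iff heven hgap⟩

/-- If the Hermitian matrices `Â(0) − Â(p)` are positive definite for all
`p ≠ 0` in the Brillouin zone, then the harmonic deviation energy `Q` is nonnegative and
vanishes exactly on the constant configurations. -/
theorem deviation_energy_nonneg_and_kernel_constants
    (L : ℕ) [NeZero L]
    (D : (Fin 3 → ZMod L) → Matrix (Fin 3) (Fin 3) ℝ)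
    (hsymm : ∀ l, (D l).IsSymm)
    (heven : ∀ l, D (-l) = D l)
    (hzero : D 0 = 0)
    (hpos : ∀ p : Fin 3 → ZMod L, p ≠ 0 → (AFourier L D 0 - AFourier L D p).PosDef) :
    (∀ y : (Fin 3 → ZMod L) → Fin 3 → ℝ, 0 ≤ Qform L D y) ∧
    (∀ y : (Fin 3 → ZMod L) → Fin 3 → ℝ,
      Qform L D y = 0 ↔ ∃ c : Fin 3 → ℝ, ∀ l, y l = c) :=
  deviation_energy_nonneg_and_kernel_constants_general L D heven hpos
end

section
/- Let f : [−π,π]³ → M₃(ℝ) be continuous with values in symmetric 3×3 real matrices, and suppose there is c > 0 such that ⟨v, f(p)v⟩ ≥ c|p|²|v|² for all p ∈ [−π,π]³ and v ∈ ℝ³, and that f(p) is positive definite for every p ≠ 0. Then the function p ↦ ‖f(p)⁻¹‖ (operator norm, defined for p ≠ 0) is integrable on [−π,π]³. -/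
/-!
Coercivity `⟨v, f(p) v⟩ ≥ c |p|² |v|²` gives `c |p|² |v| ≤ |f(p) v|`, hence
`‖f(p)⁻¹‖ ≤ c⁻¹ |p|⁻²` for `p ≠ 0`; and `|p|^(-α)` is integrable near the origin of a
`d`-dimensional space as soon as `α < d`, here with `α = 2 < 3 = d`.
The integrand is continuous away from `p = 0`, a null set.
-/

open scoped BigOperators
open Matrix MeasureTheory

/-- The cube `[−π, π]³`. -/
def brillouinCube : Set (Fin 3 → ℝ) :=
  Set.pi Set.univ fun _ => Set.Icc (-Real.pi) Real.pi

/-- The Euclidean operator norm of a real 3×3 matrix. -/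
noncomputable def matrixOpNorm (M : Matrix (Fin 3) (Fin 3) ℝ) : ℝ :=
  ‖Matrix.toEuclideanCLM (𝕜 := ℝ) M‖

open scoped RealInnerProductSpace

lemma mul_norm_le_norm_of_mul_norm_sq_le_inner {E : Type*} [NormedAddCommGroup E]
    [InnerProductSpace ℝ E] {m : ℝ} {u w : E} (h : m * ‖u‖ ^ 2 ≤ ⟪u, w⟫) :
    m * ‖u‖ ≤ ‖w‖ := by
  rcases (norm_nonneg u).eq_or_lt with hu | hu
  · simp [← hu]
  · refine le_of_mul_le_mul_right ?_ hu
    calc m * ‖u‖ * ‖u‖ = m * ‖u‖ ^ 2 := by ring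
      _ ≤ ⟪u, w⟫ := h
      _ ≤ ‖u‖ * ‖w‖ := real_inner_le_norm u w
      _ = ‖w‖ * ‖u‖ := mul_comm _ _

namespace Matrix

variable {n : Type*} [Fintype n] [DecidableEq n] {M : Matrix n n ℝ} {m : ℝ}

lemma isUnit_det_of_coercive (hm : 0 < m) (hM : ∀ v : n → ℝ, m * ∑ i, v i ^ 2 ≤ v ⬝ᵥ M *ᵥ v) :
    IsUnit M.det := by
  refine isUnit_iff_ne_zero.mpr fun hdet => ?_
  obtain ⟨v, hv, hMv⟩ := exists_mulVec_eq_zero_iff.mpr hdet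
  have hsum : ∑ i, v i ^ 2 ≤ 0 := by
    have := hM v
    rw [hMv, dotProduct_zero] at this
    exact nonpos_of_mul_nonpos_right this hm
  refine hv (funext fun i => ?_)
  have := (Finset.sum_eq_zero_iff_of_nonneg fun j _ => sq_nonneg (v j)).mp
    (le_antisymm hsum (by positivity)) i (Finset.mem_univ i)
  exact pow_eq_zero_iff (n := 2) two_ne_zero |>.mp this

lemma norm_toEuclideanCLM_inv_le_of_coercive (hm : 0 < m)
    (hM : ∀ v : n → ℝ, m * ∑ i, v i ^ 2 ≤ v ⬝ᵥ M *ᵥ v) :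
    ‖toEuclideanCLM (𝕜 := ℝ) M⁻¹‖ ≤ m⁻¹ := by
  refine ContinuousLinearMap.opNorm_le_bound _ (inv_nonneg.mpr hm.le) fun w => ?_
  set u := toEuclideanCLM (𝕜 := ℝ) M⁻¹ w
  have hMu : toEuclideanCLM (𝕜 := ℝ) M u = w := by
    rw [← mul_apply_eq_comp, ← map_mul,
      mul_nonsing_inv _ (isUnit_det_of_coercive hm hM), map_one, one_apply_eq_self]
  have hcoer : m * ‖u‖ ^ 2 ≤ ⟪u, toEuclideanCLM (𝕜 := ℝ) M u⟫ := by
    rw [EuclideanSpace.real_norm_sq_eq, inner_toEuclideanCLM]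
    exact hM u
  rw [inv_mul_eq_div, le_div_iff₀' hm, ← hMu]
  exact mul_norm_le_norm_of_mul_norm_sq_le_inner hcoer

end Matrix

open Metric in
lemma MeasureTheory.integrableOn_of_norm_le_rpow_of_isBounded {E F : Type*}
    [NormedAddCommGroup E] [NormedSpace ℝ E] [FiniteDimensional ℝ E] [MeasurableSpace E]
    [BorelSpace E] [NormedAddCommGroup F] {μ : Measure E} [μ.IsAddHaarMeasure]
    (hd : 1 ≤ Module.finrank ℝ E) {f : E → F} {C α : ℝ} (hα : α < Module.finrank ℝ E)
    {K : Set E} (hK : Bornology.IsBounded K)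
    (h_decay : ∀ᵐ x ∂μ.restrict K, ‖f x‖ ≤ C * ‖x‖ ^ (-α))
    (h_meas : AEStronglyMeasurable f (μ.restrict K)) :
    IntegrableOn f K μ := by
  obtain ⟨R, hKR⟩ := hK.subset_ball 0
  have hmajorant : IntegrableOn (fun x : E => C * ‖x‖ ^ (-α)) (ball 0 R) μ := by
    refine integrableOn_ball_of_norm_le_rpow hd hα (C := |C|) (ae_of_all _ fun x => ?_) ?_
    · rw [norm_mul, Real.norm_eq_abs, Real.norm_of_nonneg (by positivity)]
    · exact (continuous_norm.measurable.pow_const _).const_mul C |>.aestronglyMeasurable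
  exact Integrable.mono' (hmajorant.mono_set hKR) h_meas h_decay

lemma pi_norm_sq_le_sum_sq {ι : Type*} [Fintype ι] (p : ι → ℝ) : ‖p‖ ^ 2 ≤ ∑ i, p i ^ 2 := by
  refine Real.le_sqrt (norm_nonneg p) (by positivity) |>.mp ?_
  refine (pi_norm_le_iff_of_nonneg (Real.sqrt_nonneg _)).mpr fun i => ?_
  rw [Real.norm_eq_abs]
  exact Real.abs_le_sqrt (Finset.single_le_sum (fun j _ => sq_nonneg (p j)) (Finset.mem_univ i))

lemma sum_sq_pos_of_ne_zero {ι : Type*} [Fintype ι] {p : ι → ℝ} (hp : p ≠ 0) : 0 < ∑ i, p i ^ 2 :=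
  (pow_pos (norm_pos_iff.mpr hp) 2).trans_le (pi_norm_sq_le_sum_sq p)

lemma continuous_matrixOpNorm : Continuous matrixOpNorm :=
  continuous_norm.comp <| LinearMap.continuous_of_finiteDimensional
    (toEuclideanCLM (n := Fin 3) (𝕜 := ℝ)).toAlgEquiv.toLinearEquiv.toLinearMap

lemma continuousAt_matrixOpNorm_inv {M : Matrix (Fin 3) (Fin 3) ℝ} (hM : IsUnit M.det) :
    ContinuousAt (fun N => matrixOpNorm N⁻¹) M :=
  continuous_matrixOpNorm.continuousAt.comp
    (continuousAt_matrix_inv M (NormedRing.inverse_continuousAt hM.unit))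

lemma matrixOpNorm_inv_le_of_quadratic_lower_bound {M : Matrix (Fin 3) (Fin 3) ℝ}
    {ι : Type*} [Fintype ι] {p : ι → ℝ} (hp : p ≠ 0) {c : ℝ} (hc : 0 < c)
    (hM : ∀ v : Fin 3 → ℝ, c * (∑ i, p i ^ 2) * (∑ i, v i ^ 2) ≤ v ⬝ᵥ M *ᵥ v) :
    matrixOpNorm M⁻¹ ≤ c⁻¹ * ‖p‖ ^ (-2 : ℝ) := by
  calc matrixOpNorm M⁻¹ ≤ (c * ∑ i, p i ^ 2)⁻¹ :=
        norm_toEuclideanCLM_inv_le_of_coercive (mul_pos hc (sum_sq_pos_of_ne_zero hp)) hM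
    _ = c⁻¹ * (∑ i, p i ^ 2)⁻¹ := mul_inv c _
    _ ≤ c⁻¹ * (‖p‖ ^ 2)⁻¹ := by
        have := norm_pos_iff.mpr hp
        gcongr
        exact pi_norm_sq_le_sum_sq p
    _ = c⁻¹ * ‖p‖ ^ (-2 : ℝ) := by rw [Real.rpow_neg (norm_nonneg p), Real.rpow_two]

theorem integrable_inv_opNorm_of_quadratic_lower_bound_general
    (f : (Fin 3 → ℝ) → Matrix (Fin 3) (Fin 3) ℝ)
    (hcont : ContinuousOn f brillouinCube)
    (c : ℝ) (hc : 0 < c)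
    (hlow : ∀ p ∈ brillouinCube, ∀ v : Fin 3 → ℝ,
      c * (∑ i, p i ^ 2) * (∑ i, v i ^ 2) ≤ v ⬝ᵥ (f p).mulVec v) :
    IntegrableOn (fun p => matrixOpNorm (f p)⁻¹) brillouinCube := by
  set S := brillouinCube \ {0}
  have hS : MeasurableSet S :=
    (isClosed_set_pi fun _ _ => isClosed_Icc).measurableSet.diff (measurableSet_singleton 0)
  have hS_bdd : Bornology.IsBounded S :=
    (isCompact_univ_pi fun _ => isCompact_Icc).isBounded.subset Set.sdiff_subset
  have hdecay : ∀ p ∈ S, ‖matrixOpNorm (f p)⁻¹‖ ≤ c⁻¹ * ‖p‖ ^ (-2 : ℝ) := fun p hp => by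
    rw [matrixOpNorm, norm_norm]
    exact matrixOpNorm_inv_le_of_quadratic_lower_bound hp.2 hc (hlow p hp.1)
  have hcontS : ContinuousOn (fun p => matrixOpNorm (f p)⁻¹) S := fun p hp =>
    have hunit : IsUnit (f p).det :=
      isUnit_det_of_coercive (mul_pos hc (sum_sq_pos_of_ne_zero hp.2)) (hlow p hp.1)
    (continuousAt_matrixOpNorm_inv hunit).comp_continuousWithinAt
      (hcont.mono Set.sdiff_subset p hp)
  have hintS : IntegrableOn (fun p => matrixOpNorm (f p)⁻¹) S :=
    integrableOn_of_norm_le_rpow_of_isBounded (by simp) (by norm_num) hS_bdd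
      (ae_restrict_of_forall_mem hS hdecay) (hcontS.aestronglyMeasurable hS)
  exact hintS.congr_set_ae (sdiff_null_ae_eq_self (measure_singleton 0)).symm

/-- If `f : [−π,π]³ → M₃(ℝ)` is continuous with symmetric values,
satisfies `⟨v, f(p)v⟩ ≥ c|p|²|v|²` and is positive definite away from `p = 0`, then
`p ↦ ‖f(p)⁻¹‖` (operator norm) is integrable on `[−π,π]³`. -/
theorem integrable_inv_opNorm_of_quadratic_lower_bound
    (f : (Fin 3 → ℝ) → Matrix (Fin 3) (Fin 3) ℝ)
    (hcont : ContinuousOn f brillouinCube)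
    (hsymm : ∀ p, (f p).IsSymm)
    (c : ℝ) (hc : 0 < c)
    (hlow : ∀ p ∈ brillouinCube, ∀ v : Fin 3 → ℝ,
      c * (∑ i, p i ^ 2) * (∑ i, v i ^ 2) ≤ v ⬝ᵥ (f p).mulVec v)
    (hpd : ∀ p ∈ brillouinCube, p ≠ 0 → (f p).PosDef) :
    IntegrableOn (fun p => matrixOpNorm (f p)⁻¹) brillouinCube :=
  integrable_inv_opNorm_of_quadratic_lower_bound_general f hcont c hc hlow
end

section
/- Let C : ℤ³ → M₃(ℝ) satisfy C(−λ) = C(λ)ᵀ for all λ, and assume C is a positive semidefinite kernel: for every finitely supported g : ℤ³ → ℝ³, ∑_{λ,μ∈ℤ³} ⟨g(λ), C(λ−μ) g(μ)⟩ ≥ 0. For dipoles dᵢ = (λᵢ, μᵢ, αᵢ) ∈ ℤ³ × ℤ³ × ℝ³ define V(dᵢ|dⱼ) = ⟨αᵢ, (C(λᵢ−λⱼ) + C(μᵢ−μⱼ) − C(λᵢ−μⱼ) − C(μᵢ−λⱼ)) αⱼ⟩. Then for every n and every family d₁, …, d_n of dipoles, ∑_{1 ≤ i ≠ j ≤ n}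 V(dᵢ|dⱼ) ≥ −2 ∑_{i=1}^{n} ⟨αᵢ, (C(0) − C(λᵢ−μᵢ)) αᵢ⟩. -/
open scoped BigOperators
open Matrix

/-- A dipole: endpoints `λ, μ ∈ ℤ³` and charge vector `α ∈ ℝ³`. -/
abbrev Dipole : Type := (Fin 3 → ℤ) × (Fin 3 → ℤ) × (Fin 3 → ℝ)

/-- The dipole–dipole interaction
`V(d|d') = ⟨α, (C(λ−λ') + C(μ−μ') − C(λ−μ') − C(μ−λ')) α'⟩`. -/
def dipoleV (C : (Fin 3 → ℤ) → Matrix (Fin 3) (Fin 3) ℝ) (d e : Dipole) : ℝ :=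
  d.2.2 ⬝ᵥ (C (d.1 - e.1) + C (d.2.1 - e.2.1)
      - C (d.1 - e.2.1) - C (d.2.1 - e.1)).mulVec e.2.2

lemma sum_dotProduct' {ι : Type*} (s : Finset ι) (f : ι → (Fin 3 → ℝ)) (v : Fin 3 → ℝ) :
    (∑ i ∈ s, f i) ⬝ᵥ v = ∑ i ∈ s, f i ⬝ᵥ v := by
  simp only [dotProduct, Finset.sum_apply, Finset.sum_mul]
  exact Finset.sum_comm

lemma dotProduct_sum'' {ι : Type*} (s : Finset ι) (u : Fin 3 → ℝ) (f : ι → (Fin 3 → ℝ)) :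
    u ⬝ᵥ (∑ i ∈ s, f i) = ∑ i ∈ s, u ⬝ᵥ f i := by
  simp only [dotProduct, Finset.sum_apply, Finset.mul_sum]
  exact Finset.sum_comm

lemma dotProduct_mulVec_sum' {ι : Type*} (s : Finset ι) (u : Fin 3 → ℝ)
    (M : Matrix (Fin 3) (Fin 3) ℝ) (f : ι → (Fin 3 → ℝ)) :
    u ⬝ᵥ M.mulVec (∑ i ∈ s, f i) = ∑ i ∈ s, u ⬝ᵥ M.mulVec (f i) := by
  rw [← Matrix.mulVecLin_apply, map_sum, dotProduct_sum'']
  simp [Matrix.mulVecLin_apply]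

lemma collapse_left (S : Finset (Fin 3 → ℤ)) {a b : Fin 3 → ℤ} (ha : a ∈ S) (hb : b ∈ S)
    (α : Fin 3 → ℝ) (f : (Fin 3 → ℤ) → (Fin 3 → ℝ)) :
    ∑ l ∈ S, ((if a = l then α else 0) - (if b = l then α else 0)) ⬝ᵥ f l
      = α ⬝ᵥ f a - α ⬝ᵥ f b := by
  have : ∀ l ∈ S, ((if a = l then α else 0) - (if b = l then α else 0)) ⬝ᵥ f l
      = (if a = l then α ⬝ᵥ f l else 0) - (if b = l then α ⬝ᵥ f l else 0) := by
    intro l _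
    rw [sub_dotProduct]
    congr 1 <;> split_ifs <;> simp
  rw [Finset.sum_congr rfl this, Finset.sum_sub_distrib, Finset.sum_ite_eq S a,
    Finset.sum_ite_eq S b, if_pos ha, if_pos hb]

lemma collapse_right (S : Finset (Fin 3 → ℤ)) {a b : Fin 3 → ℤ} (ha : a ∈ S) (hb : b ∈ S)
    (β : Fin 3 → ℝ) (α : Fin 3 → ℝ) (M : (Fin 3 → ℤ) → Matrix (Fin 3) (Fin 3) ℝ) :
    ∑ m ∈ S, α ⬝ᵥ (M m).mulVec ((if a = m then β else 0) - (if b = m then β else 0))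
      = α ⬝ᵥ (M a).mulVec β - α ⬝ᵥ (M b).mulVec β := by
  have : ∀ m ∈ S, α ⬝ᵥ (M m).mulVec ((if a = m then β else 0) - (if b = m then β else 0))
      = (if a = m then α ⬝ᵥ (M m).mulVec β else 0)
        - (if b = m then α ⬝ᵥ (M m).mulVec β else 0) := by
    intro m _
    rw [Matrix.mulVec_sub, dotProduct_sub]
    congr 1 <;> split_ifs <;> simp
  rw [Finset.sum_congr rfl this, Finset.sum_sub_distrib, Finset.sum_ite_eq S a,
    Finset.sum_ite_eq S b, if_pos ha, if_pos hb]

/-- Stability estimate for the dipole gas: if `C : ℤ³ → M₃(ℝ)` satisfies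
`C(−λ) = C(λ)ᵀ` and is a positive semidefinite kernel, then
`∑_{i≠j} V(dᵢ|dⱼ) ≥ −2 ∑_i ⟨αᵢ, (C(0) − C(λᵢ−μᵢ)) αᵢ⟩`. -/
theorem dipole_energy_stability
    (C : (Fin 3 → ℤ) → Matrix (Fin 3) (Fin 3) ℝ)
    (hrefl : ∀ l, C (-l) = (C l)ᵀ)
    (hpsd : ∀ g : (Fin 3 → ℤ) →₀ (Fin 3 → ℝ),
      0 ≤ ∑ l ∈ g.support, ∑ m ∈ g.support, g l ⬝ᵥ (C (l - m)).mulVec (g m))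
    (n : ℕ) (d : Fin n → Dipole) :
    - 2 * ∑ i : Fin n,
        (d i).2.2 ⬝ᵥ (C 0 - C ((d i).1 - (d i).2.1)).mulVec (d i).2.2
      ≤ ∑ i : Fin n, ∑ j ∈ Finset.univ.erase i, dipoleV C (d i) (d j) := by
  classical
  set S : Finset (Fin 3 → ℤ) :=
    Finset.image (fun i => (d i).1) Finset.univ ∪
    Finset.image (fun i => (d i).2.1) Finset.univ with hS
  have hlam : ∀ i, (d i).1 ∈ S := fun i => by simp [hS]
  have hmu : ∀ i, (d i).2.1 ∈ S := fun i => by simp [hS]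
  set g : (Fin 3 → ℤ) →₀ (Fin 3 → ℝ) :=
    ∑ i : Fin n, (Finsupp.single (d i).1 (d i).2.2 - Finsupp.single (d i).2.1 (d i).2.2)
    with hg
  have hsupp : g.support ⊆ S := by
    refine (Finsupp.support_finset_sum (s := Finset.univ)
      (f := fun i => Finsupp.single (d i).1 (d i).2.2
        - Finsupp.single (d i).2.1 (d i).2.2)).trans ?_
    intro x hx
    rcases Finset.mem_biUnion.1 hx with ⟨i, _, hxi⟩
    have := Finsupp.support_sub (f := Finsupp.single (d i).1 (d i).2.2)
      (g := Finsupp.single (d i).2.1 (d i).2.2) hxi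
    rcases Finset.mem_union.1 this with h | h
    · have := Finsupp.support_single_subset h
      simp only [Finset.mem_singleton] at this
      subst this; exact hlam i
    · have := Finsupp.support_single_subset h
      simp only [Finset.mem_singleton] at this
      subst this; exact hmu i
  have hgapp : ∀ x, g x = ∑ i : Fin n,
      ((if (d i).1 = x then (d i).2.2 else 0) - (if (d i).2.1 = x then (d i).2.2 else 0)) := by
    intro x
    rw [hg, Finsupp.finset_sum_apply]
    refine Finset.sum_congr rfl fun i _ => ?_
    rw [Finsupp.sub_apply, Finsupp.single_apply, Finsupp.single_apply]
  have hQ : 0 ≤ ∑ l ∈ S, ∑ m ∈ S, g l ⬝ᵥ (C (l - m)).mulVec (g m) := by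
    have h1 : ∑ l ∈ S, ∑ m ∈ S, g l ⬝ᵥ (C (l - m)).mulVec (g m)
        = ∑ l ∈ g.support, ∑ m ∈ g.support, g l ⬝ᵥ (C (l - m)).mulVec (g m) := by
      rw [← Finset.sum_subset hsupp (fun l _ hl => ?_)]
      · refine Finset.sum_congr rfl fun l _ => ?_
        rw [← Finset.sum_subset hsupp (fun m _ hm => ?_)]
        rw [Finsupp.notMem_support_iff.1 hm]
        simp
      · have : g l = 0 := Finsupp.notMem_support_iff.1 hl
        rw [this]
        simp
    rw [h1]
    exact hpsd g
  have hexp : ∑ l ∈ S, ∑ m ∈ S, g l ⬝ᵥ (C (l - m)).mulVec (g m)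
      = ∑ i : Fin n, ∑ j : Fin n, dipoleV C (d i) (d j) := by
    have step1 : ∀ l m, g l ⬝ᵥ (C (l - m)).mulVec (g m)
        = ∑ i : Fin n, ∑ j : Fin n,
            ((if (d i).1 = l then (d i).2.2 else 0) - (if (d i).2.1 = l then (d i).2.2 else 0))
              ⬝ᵥ (C (l - m)).mulVec
            ((if (d j).1 = m then (d j).2.2 else 0)
              - (if (d j).2.1 = m then (d j).2.2 else 0)) := by
      intro l m
      rw [hgapp l, hgapp m, sum_dotProduct']
      refine Finset.sum_congr rfl fun i _ => ?_
      rw [dotProduct_mulVec_sum']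
    calc ∑ l ∈ S, ∑ m ∈ S, g l ⬝ᵥ (C (l - m)).mulVec (g m)
        = ∑ l ∈ S, ∑ m ∈ S, ∑ i : Fin n, ∑ j : Fin n,
            ((if (d i).1 = l then (d i).2.2 else 0) - (if (d i).2.1 = l then (d i).2.2 else 0))
              ⬝ᵥ (C (l - m)).mulVec
            ((if (d j).1 = m then (d j).2.2 else 0)
              - (if (d j).2.1 = m then (d j).2.2 else 0)) := by
          exact Finset.sum_congr rfl fun l _ => Finset.sum_congr rfl fun m _ => step1 l m
      _ = ∑ i : Fin n, ∑ j : Fin n, ∑ l ∈ S, ∑ m ∈ S,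
            ((if (d i).1 = l then (d i).2.2 else 0) - (if (d i).2.1 = l then (d i).2.2 else 0))
              ⬝ᵥ (C (l - m)).mulVec
            ((if (d j).1 = m then (d j).2.2 else 0)
              - (if (d j).2.1 = m then (d j).2.2 else 0)) := by
          rw [show (∑ l ∈ S, ∑ m ∈ S, ∑ i : Fin n, ∑ j : Fin n,
              ((if (d i).1 = l then (d i).2.2 else 0) - (if (d i).2.1 = l then (d i).2.2 else 0))
                ⬝ᵥ (C (l - m)).mulVec
              ((if (d j).1 = m then (d j).2.2 else 0)
                - (if (d j).2.1 = m then (d j).2.2 else 0)))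
            = ∑ l ∈ S, ∑ i : Fin n, ∑ m ∈ S, ∑ j : Fin n, _ from
              Finset.sum_congr rfl fun l _ => Finset.sum_comm]
          rw [Finset.sum_comm]
          refine Finset.sum_congr rfl fun i _ => ?_
          rw [show (∑ l ∈ S, ∑ m ∈ S, ∑ j : Fin n,
              ((if (d i).1 = l then (d i).2.2 else 0) - (if (d i).2.1 = l then (d i).2.2 else 0))
                ⬝ᵥ (C (l - m)).mulVec
              ((if (d j).1 = m then (d j).2.2 else 0)
                - (if (d j).2.1 = m then (d j).2.2 else 0)))
            = ∑ l ∈ S, ∑ j : Fin n, ∑ m ∈ S, _ from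
              Finset.sum_congr rfl fun l _ => Finset.sum_comm]
          exact Finset.sum_comm
      _ = ∑ i : Fin n, ∑ j : Fin n, dipoleV C (d i) (d j) := by
          refine Finset.sum_congr rfl fun i _ => Finset.sum_congr rfl fun j _ => ?_
          rw [Finset.sum_congr rfl (fun l _ =>
            collapse_right S (hlam j) (hmu j) (d j).2.2 _ (fun m => C (l - m)))]
          rw [Finset.sum_congr rfl (fun l (_ : l ∈ S) => rfl :
            ∀ l ∈ S, _ = _), Finset.sum_sub_distrib,
            collapse_left S (hlam i) (hmu i) (d i).2.2
              (fun l => (C (l - (d j).1)).mulVec (d j).2.2),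
            collapse_left S (hlam i) (hmu i) (d i).2.2
              (fun l => (C (l - (d j).2.1)).mulVec (d j).2.2)]
          unfold dipoleV
          rw [Matrix.sub_mulVec, Matrix.sub_mulVec, Matrix.add_mulVec,
            dotProduct_sub, dotProduct_sub, dotProduct_add]
          ring
  have hdiag : ∀ i, dipoleV C (d i) (d i)
      = 2 * ((d i).2.2 ⬝ᵥ (C 0 - C ((d i).1 - (d i).2.1)).mulVec (d i).2.2) := by
    intro i
    have hsym : (d i).2.2 ⬝ᵥ (C ((d i).2.1 - (d i).1)).mulVec (d i).2.2
        = (d i).2.2 ⬝ᵥ (C ((d i).1 - (d i).2.1)).mulVec (d i).2.2 := by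
      have h1 : (d i).2.1 - (d i).1 = -((d i).1 - (d i).2.1) := by ring
      rw [h1, hrefl, Matrix.dotProduct_mulVec, Matrix.vecMul_transpose, dotProduct_comm]
    unfold dipoleV
    rw [Matrix.sub_mulVec, Matrix.sub_mulVec, Matrix.add_mulVec,
      dotProduct_sub, dotProduct_sub, dotProduct_add,
      Matrix.sub_mulVec, dotProduct_sub]
    simp only [sub_self, hsym]
    ring
  have hsplit : ∑ i : Fin n, ∑ j : Fin n, dipoleV C (d i) (d j)
      = (∑ i : Fin n, ∑ j ∈ Finset.univ.erase i, dipoleV C (d i) (d j))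
        + ∑ i : Fin n, dipoleV C (d i) (d i) := by
    rw [← Finset.sum_add_distrib]
    refine Finset.sum_congr rfl fun i _ => ?_
    rw [Finset.sum_erase_add _ _ (Finset.mem_univ i)]
  have h2 : ∑ i : Fin n, dipoleV C (d i) (d i)
      = 2 * ∑ i : Fin n, (d i).2.2 ⬝ᵥ (C 0 - C ((d i).1 - (d i).2.1)).mulVec (d i).2.2 := by
    rw [Finset.mul_sum]
    exact Finset.sum_congr rfl fun i _ => hdiag i
  have hfinal := hQ
  rw [hexp, hsplit, h2] at hfinal
  linarith
end

section
/- For n ≥ 2 let T_n be the set of maps η : {2,…,n} → ℕ with 1 ≤ η(i) ≤ i for every i, and for s = (s₁,…,s_{n−1}) ∈ [0,1]^{n−1} define f(η,s) = ∏_{i=2}^{n} ∏_{j=η(i)}^{i−1} s_j (where an empty product, occurring when η(i) = i, equals 1). Then ∑_{η ∈ T_n} ∫_{[0,1]^{n−1}} f(η,s) ds ≤ e^{n−1}. -/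
/-!
Summing over `η` factorises the tree function: `∑_η f(η, s) = ∏_{m=1}^{n-1} v_m`, where
`v_0 = 1` and `v_m = 1 + s_m v_{m-1}` is the Horner form of `∑_{a ≤ m+1} ∏_{a ≤ j ≤ m} s_j`.
Integrating out `s_1` turns this product with initial value `x` into `(1 + s_1 x)` times the
same product in one variable fewer with initial value `1 + s_1 x ≥ 1`. Induction then bounds
the integral with initial value `x ≥ 1` over `N` variables by `e^{N + x - 1}`, the step being
the exact identity `∫_0^1 (1 + t x) e^{N + t x} dt = e^{N + x}`.
-/

open scoped BigOperators
open MeasureTheory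

/-- `sval n s j` is the interpolation parameter `s_j` (with `1 ≤ j ≤ n−1`, 1-based),
realized from `s : Fin (n−1) → ℝ` via `s_j = s ⟨j−1⟩`. -/
noncomputable def sval (n : ℕ) (s : Fin (n - 1) → ℝ) (j : ℕ) : ℝ :=
  if h : j - 1 < n - 1 then s ⟨j - 1, h⟩ else 1

/-- The set `T_n` of tree functions, encoded as maps `η : Fin (n−1) → ℕ` where the value
`η k` represents `η(k+2) ∈ {1, …, k+2}` (so `i = k+2` runs over `{2, …, n}`). -/
def treeFns (n : ℕ) : Finset (Fin (n - 1) → ℕ) :=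
  Fintype.piFinset fun k => Finset.Icc 1 (k.val + 2)

/-- The Brydges–Federbush tree function
`f(η,s) = ∏_{i=2}^{n} ∏_{j=η(i)}^{i−1} s_j` (empty products equal `1`). -/
noncomputable def treeWeight (n : ℕ) (η : Fin (n - 1) → ℕ) (s : Fin (n - 1) → ℝ) : ℝ :=
  ∏ k : Fin (n - 1), ∏ j ∈ Finset.Ico (η k) (k.val + 2), sval n s j

namespace TreeFunction

noncomputable def affineChain (x : ℝ) (t : ℕ → ℝ) : ℕ → ℝ
  | 0 => x
  | m + 1 => 1 + t (m + 1) * affineChain x t m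

theorem sum_Icc_prod_Ico_eq_affineChain (t : ℕ → ℝ) (K : ℕ) :
    ∑ a ∈ Finset.Icc 1 (K + 1), ∏ j ∈ Finset.Ico a (K + 1), t j = affineChain 1 t K := by
  induction K with
  | zero => simp [affineChain]
  | succ K ih =>
    have hsplit : ∀ a ∈ Finset.Icc 1 (K + 1),
        ∏ j ∈ Finset.Ico a (K + 2), t j = (∏ j ∈ Finset.Ico a (K + 1), t j) * t (K + 1) :=
      fun a ha => Finset.prod_Ico_succ_top (Finset.mem_Icc.1 ha).2 t
    rw [Finset.sum_Icc_succ_top (by omega), Finset.sum_congr rfl hsplit, ← Finset.sum_mul, ih]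
    simp [affineChain, add_comm, mul_comm]

theorem affineChain_shift (x : ℝ) (t : ℕ → ℝ) (m : ℕ) :
    affineChain (affineChain x t 1) (fun j => t (j + 1)) m = affineChain x t (m + 1) := by
  induction m with
  | zero => rfl
  | succ m ih => simp only [affineChain] at ih ⊢; rw [ih]

noncomputable def chainWeight : (N : ℕ) → ℝ → (Fin N → ℝ) → ℝ
  | 0, _, _ => 1
  | N + 1, x, s => (1 + s 0 * x) * chainWeight N (1 + s 0 * x) (Fin.tail s)

theorem chainWeight_cons (N : ℕ) (x a : ℝ) (s : Fin N → ℝ) :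
    chainWeight (N + 1) x (Fin.cons a s) = (1 + a * x) * chainWeight N (1 + a * x) s := by
  simp only [chainWeight, Fin.cons_zero, Fin.tail_cons]

theorem chainWeight_eq_prod_affineChain (N : ℕ) (x : ℝ) (t : ℕ → ℝ) :
    chainWeight N x (fun i => t (i + 1)) = ∏ i : Fin N, affineChain x t (i + 1) := by
  induction N generalizing x t with
  | zero => rfl
  | succ N ih =>
    calc chainWeight (N + 1) x (fun i => t (i + 1))
        = affineChain x t 1 * chainWeight N (affineChain x t 1) fun i => t (i + 1 + 1) := rfl
      _ = affineChain x t 1 * ∏ i : Fin N, affineChain x t (i + 1 + 1) := by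
        rw [ih (affineChain x t 1) fun j => t (j + 1)]; simp only [affineChain_shift]
      _ = ∏ i : Fin (N + 1), affineChain x t (i + 1) := by rw [Fin.prod_univ_succ]; rfl

theorem sum_treeWeight_eq_chainWeight (n : ℕ) (s : Fin (n - 1) → ℝ) :
    ∑ η ∈ treeFns n, treeWeight n η s = chainWeight (n - 1) 1 s := by
  have hs : (fun i : Fin (n - 1) => sval n s (i + 1)) = s := by
    funext i
    simp only [sval, Nat.add_sub_cancel, dif_pos i.isLt]
  rw [treeFns]
  unfold treeWeight
  conv_rhs => rw [← hs, chainWeight_eq_prod_affineChain]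
  rw [← Finset.prod_congr rfl fun k _ => sum_Icc_prod_Ico_eq_affineChain (sval n s) (k.val + 1),
    Finset.prod_univ_sum]

theorem continuous_chainWeight (N : ℕ) :
    Continuous fun p : ℝ × (Fin N → ℝ) => chainWeight N p.1 p.2 := by
  induction N with
  | zero => exact continuous_const
  | succ N ih =>
    have hx : Continuous fun p : ℝ × (Fin (N + 1) → ℝ) => 1 + p.2 0 * p.1 := by fun_prop
    exact hx.mul (ih.comp (hx.prodMk (by fun_prop)))

theorem continuous_treeWeight (n : ℕ) (η : Fin (n - 1) → ℕ) : Continuous (treeWeight n η) := by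
  refine continuous_finsetProd _ fun k _ => continuous_finsetProd _ fun j _ => ?_
  unfold sval
  split_ifs <;> fun_prop

section FinCons

variable {α E : Type*} [MeasurableSpace α] [NormedAddCommGroup E]
  (μ : Measure α) [SigmaFinite μ] {N : ℕ} {f : (Fin (N + 1) → α) → E}

theorem integrable_comp_fin_cons (hf : Integrable f (Measure.pi fun _ => μ)) :
    Integrable (fun p : α × (Fin N → α) => f (Fin.cons p.1 p.2))
      (μ.prod (Measure.pi fun _ => μ)) := by
  have e := (measurePreserving_piFinSuccAbove (fun _ : Fin (N + 1) => μ) 0).symm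
  rw [← e.integrable_comp_emb (MeasurableEquiv.measurableEmbedding _)] at hf
  simpa [Function.comp_def, MeasurableEquiv.piFinSuccAbove_symm_apply, Fin.insertNthEquiv,
    Fin.insertNth_zero'] using hf

theorem integral_pi_fin_succ [NormedSpace ℝ E] (hf : Integrable f (Measure.pi fun _ => μ)) :
    ∫ s, f s ∂(Measure.pi fun _ => μ) =
      ∫ t, ∫ y, f (Fin.cons t y) ∂(Measure.pi fun _ => μ) ∂μ := by
  rw [← (measurePreserving_piFinSuccAbove (fun _ : Fin (N + 1) => μ) 0).symm.integral_comp',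
    ← integral_prod _ (integrable_comp_fin_cons μ hf)]
  simp [MeasurableEquiv.piFinSuccAbove_symm_apply, Fin.insertNthEquiv, Fin.insertNth_zero']

end FinCons

noncomputable abbrev unitCubeMeasure (N : ℕ) : Measure (Fin N → ℝ) :=
  Measure.pi fun _ => volume.restrict (Set.Icc (0 : ℝ) 1)

theorem restrict_volume_univ_pi_Icc (N : ℕ) :
    volume.restrict (Set.univ.pi fun _ : Fin N => Set.Icc (0 : ℝ) 1) = unitCubeMeasure N := by
  rw [volume_pi, Measure.restrict_pi_pi]

theorem integrable_unitCubeMeasure_of_continuous {N : ℕ} {f : (Fin N → ℝ) → ℝ}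
    (hf : Continuous f) : Integrable f (unitCubeMeasure N) := by
  rw [← restrict_volume_univ_pi_Icc]
  exact hf.continuousOn.integrableOn_compact (isCompact_univ_pi fun _ => isCompact_Icc)

theorem integrable_chainWeight (N : ℕ) (x : ℝ) :
    Integrable (chainWeight N x) (unitCubeMeasure N) :=
  integrable_unitCubeMeasure_of_continuous
    ((continuous_chainWeight N).comp (Continuous.prodMk_right x))

theorem integral_chainWeight_succ (N : ℕ) (x : ℝ) :
    ∫ s, chainWeight (N + 1) x s ∂unitCubeMeasure (N + 1) =
      ∫ t in Set.Icc (0 : ℝ) 1,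
        (1 + t * x) * ∫ y, chainWeight N (1 + t * x) y ∂unitCubeMeasure N := by
  rw [integral_pi_fin_succ _ (integrable_chainWeight (N + 1) x)]
  simp only [chainWeight_cons, integral_const_mul]

theorem integrableOn_integral_chainWeight (N : ℕ) (x : ℝ) :
    IntegrableOn (fun t => (1 + t * x) * ∫ y, chainWeight N (1 + t * x) y ∂unitCubeMeasure N)
      (Set.Icc 0 1) := by
  have h := (integrable_comp_fin_cons _ (integrable_chainWeight (N + 1) x)).integral_prod_left
  simp only [chainWeight_cons, integral_const_mul] at h
  exact h

theorem integral_Icc_one_add_mul_mul_exp (c x : ℝ) :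
    ∫ t in Set.Icc (0 : ℝ) 1, (1 + t * x) * Real.exp (c + t * x) = Real.exp (c + x) := by
  have hderiv : ∀ t ∈ Set.uIcc (0 : ℝ) 1, HasDerivAt (fun u => u * Real.exp (c + u * x))
      ((1 + t * x) * Real.exp (c + t * x)) t := by
    intro t _
    have h := (hasDerivAt_id' t).fun_mul (((hasDerivAt_id' t).mul_const x).const_add c).exp
    exact h.congr_deriv (by ring)
  rw [integral_Icc_eq_integral_Ioc, ← intervalIntegral.integral_of_le zero_le_one,
    intervalIntegral.integral_eq_sub_of_hasDerivAt hderiv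
      (Continuous.intervalIntegrable (by fun_prop) 0 1)]
  simp

theorem integral_chainWeight_le (N : ℕ) {x : ℝ} (hx : 1 ≤ x) :
    ∫ s, chainWeight N x s ∂unitCubeMeasure N ≤ Real.exp (N + x - 1) := by
  induction N generalizing x with
  | zero =>
    rw [unitCubeMeasure, Measure.pi_of_empty]
    simpa [chainWeight] using hx
  | succ N ih =>
    have hpoint : ∀ t ∈ Set.Icc (0 : ℝ) 1,
        (1 + t * x) * ∫ y, chainWeight N (1 + t * x) y ∂unitCubeMeasure N ≤
          (1 + t * x) * Real.exp (N + t * x) := by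
      intro t ht
      have htx : 0 ≤ t * x := mul_nonneg ht.1 (by linarith)
      have hN := ih (x := 1 + t * x) (by linarith)
      rw [show (N : ℝ) + (1 + t * x) - 1 = N + t * x by ring] at hN
      exact mul_le_mul_of_nonneg_left hN (by linarith)
    calc ∫ s, chainWeight (N + 1) x s ∂unitCubeMeasure (N + 1)
        = ∫ t in Set.Icc (0 : ℝ) 1,
            (1 + t * x) * ∫ y, chainWeight N (1 + t * x) y ∂unitCubeMeasure N :=
          integral_chainWeight_succ N x
      _ ≤ ∫ t in Set.Icc (0 : ℝ) 1, (1 + t * x) * Real.exp (N + t * x) :=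
          setIntegral_mono_on (integrableOn_integral_chainWeight N x)
            (Continuous.integrableOn_Icc (by fun_prop)) measurableSet_Icc hpoint
      _ = Real.exp ((N + 1 : ℕ) + x - 1) := by
          rw [integral_Icc_one_add_mul_mul_exp]
          push_cast
          ring_nf

end TreeFunction

open TreeFunction

/-- The tree-function estimate of Brydges–Federbush:
`∑_{η ∈ T_n} ∫_{[0,1]^{n−1}} f(η,s) ds ≤ e^{n−1}`. -/
theorem tree_function_estimate (n : ℕ) (hn : 2 ≤ n) :
    ∑ η ∈ treeFns n,
      ∫ s in Set.pi Set.univ (fun _ : Fin (n - 1) => Set.Icc (0 : ℝ) 1),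
        treeWeight n η s
      ≤ Real.exp ((n : ℝ) - 1) := by
  rw [restrict_volume_univ_pi_Icc, ← integral_finsetSum _ fun η _ =>
    integrable_unitCubeMeasure_of_continuous (continuous_treeWeight n η)]
  simp_rw [sum_treeWeight_eq_chainWeight]
  calc ∫ s, chainWeight (n - 1) 1 s ∂unitCubeMeasure (n - 1)
      ≤ Real.exp ((n - 1 : ℕ) + 1 - 1) := integral_chainWeight_le (n - 1) le_rfl
    _ = Real.exp ((n : ℝ) - 1) := by rw [Nat.cast_sub (by omega)]; ring_nf
end

section
/- Let n ≥ 2 and let Q be a real symmetric positive semidefinite n×n matrix. For s = (s₁,…,s_{n−1}) ∈ [0,1]^{n−1} define the matrix Q(s) by Q(s)_{ii} = Q_{ii} and, for i < j, Q(s)_{ij} = Q(s)_{ji} = (∏_{k=i}^{j−1} s_k) · Q_{ij}. Then Q(s) is positive semidefinite for every s ∈ [0,1]^{n−1}. -/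
open scoped BigOperators
open Matrix

/-- `svalQ n s k` is the interpolation parameter `s` at 0-based position `k < n−1`
(equal to `1` out of range). -/
noncomputable def svalQ (n : ℕ) (s : Fin (n - 1) → ℝ) (k : ℕ) : ℝ :=
  if h : k < n - 1 then s ⟨k, h⟩ else 1

/-!
The weight `∏_{k=i}^{j-1} s_k` factors as `∏_k C_k(i, j)`, where `C_k(i, j) = s_k` if the cut
between `k` and `k + 1` separates `i` from `j`, and `1` otherwise. Each `C_k` is the convex
combination `s_k • J + (1 - s_k) • B_k` of the all-ones matrix `J` and the block-diagonal
all-ones matrix `B_k` of the cut, both Gram matrices. Hence `Q(s) = C_0 ⊙ ⋯ ⊙ C_{n-1} ⊙ Q`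
is positive semidefinite by the Schur product theorem.
-/

open scoped ComplexOrder

namespace Matrix

variable {ι : Type*}

def cutMatrix {R : Type*} [One R] (p : ι → Prop) [DecidablePred p] (t : R) : Matrix ι ι R :=
  of fun i j => if (p i ↔ p j) then 1 else t

variable [Finite ι]

theorem posSemidef_cutMatrix {p : ι → Prop} [DecidablePred p] {t : ℝ} (ht₀ : 0 ≤ t)
    (ht₁ : t ≤ 1) : (cutMatrix p t).PosSemidef := by
  set a : ι → ℝ := fun i => if p i then 1 else 0
  set b : ι → ℝ := fun i => if p i then 0 else 1
  have hconvex :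
      cutMatrix p t = t • vecMulVec 1 1 + (1 - t) • (vecMulVec a a + vecMulVec b b) := by
    ext i j
    by_cases hi : p i <;> by_cases hj : p j <;> simp [cutMatrix, a, b, vecMulVec_apply, hi, hj]
  have hgram (v : ι → ℝ) : (vecMulVec v v).PosSemidef := by
    simpa using posSemidef_vecMulVec_self_star v
  rw [hconvex]
  exact .add (.smul (hgram 1) ht₀) (.smul (.add (hgram a) (hgram b)) (sub_nonneg.mpr ht₁))

theorem posSemidef_of_entrywise_prod {𝕜 κ : Type*} [RCLike 𝕜] (s : Finset κ)
    {M : κ → Matrix ι ι 𝕜} (hM : ∀ k ∈ s, (M k).PosSemidef) :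
    (of fun i j => ∏ k ∈ s, M k i j).PosSemidef := by
  classical
  induction s using Finset.induction_on with
  | empty => simpa [vecMulVec] using posSemidef_vecMulVec_self_star (1 : ι → 𝕜)
  | insert k s hk ih =>
    have hprod := (hM k (s.mem_insert_self k)).hadamard
      (ih fun l hl => hM l (Finset.mem_insert_of_mem hl))
    convert hprod using 1
    ext i j
    simp [Finset.prod_insert hk]

end Matrix

theorem Finset.prod_Ico_min_max_eq_prod_range_ite {M : Type*} [CommMonoid M] (f : ℕ → M)
    {a b N : ℕ} (ha : a ≤ N) (hb : b ≤ N) :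
    ∏ k ∈ Ico (min a b) (max a b), f k =
      ∏ k ∈ range N, if (a ≤ k ↔ b ≤ k) then 1 else f k := by
  rw [prod_ite, prod_const_one, one_mul]
  congr 1
  ext k
  simp only [mem_Ico, mem_filter, mem_range]
  omega

theorem svalQ_mem_Icc {n : ℕ} {s : Fin (n - 1) → ℝ} (hs : ∀ k, s k ∈ Set.Icc (0 : ℝ) 1)
    (k : ℕ) : svalQ n s k ∈ Set.Icc (0 : ℝ) 1 := by
  unfold svalQ
  split_ifs
  exacts [hs _, ⟨zero_le_one, le_rfl⟩]

theorem interpolated_matrix_posSemidef_general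
    (n : ℕ)
    (Q : Matrix (Fin n) (Fin n) ℝ) (hQ : Q.PosSemidef)
    (s : Fin (n - 1) → ℝ) (hs : ∀ k, s k ∈ Set.Icc (0 : ℝ) 1) :
    Matrix.PosSemidef (Matrix.of fun i j : Fin n =>
      (∏ k ∈ Finset.Ico (min i.val j.val) (max i.val j.val), svalQ n s k) * Q i j) := by
  set C : ℕ → Matrix (Fin n) (Fin n) ℝ :=
    fun k => cutMatrix (fun i => i.val ≤ k) (svalQ n s k)
  have hfactor : (of fun i j : Fin n =>
      (∏ k ∈ Finset.Ico (min i.val j.val) (max i.val j.val), svalQ n s k) * Q i j) =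
      (of fun i j => ∏ k ∈ Finset.range n, C k i j) ⊙ Q := by
    ext i j
    rw [hadamard_apply, of_apply, of_apply,
      Finset.prod_Ico_min_max_eq_prod_range_ite _ i.isLt.le j.isLt.le]
    rfl
  rw [hfactor]
  refine .hadamard (posSemidef_of_entrywise_prod _ fun k _ => ?_) hQ
  exact posSemidef_cutMatrix (svalQ_mem_Icc hs k).1 (svalQ_mem_Icc hs k).2

/-- The Brydges–Federbush interpolation preserves positive
semidefiniteness: if `Q` is positive semidefinite and `Q(s)` is obtained from `Q` by
multiplying the off-diagonal entry `Q_{ij}` (`i < j`) by `∏_{k=i}^{j−1} s_k` with all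
`s_k ∈ [0,1]`, then `Q(s)` is positive semidefinite. -/
theorem interpolated_matrix_posSemidef
    (n : ℕ) (hn : 2 ≤ n)
    (Q : Matrix (Fin n) (Fin n) ℝ) (hQ : Q.PosSemidef)
    (s : Fin (n - 1) → ℝ) (hs : ∀ k, s k ∈ Set.Icc (0 : ℝ) 1) :
    Matrix.PosSemidef (Matrix.of fun i j : Fin n =>
      (∏ k ∈ Finset.Ico (min i.val j.val) (max i.val j.val), svalQ n s k) * Q i j) :=
  interpolated_matrix_posSemidef_general n Q hQ s hs
end
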